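/- arXiv:2009.00738 — 4 statements merged into one kernel-verified Lean document; each statement's English description precedes it below -/
import Mathlib

section
/- Let H_m be a nonempty set of histories, Choice^m_α a finite nonempty partition of H_m into nonempty actions, Value : H_m → ℝ, and State^m_α a collection of subsets of H_m such that K ∩ S is nonempty for every action K ∈ Choice^m_α and every S ∈ State^m_α. Then the set Optimal^m_α of undominated actions is nonempty; that is, there exists an action K ∈ Choice^m_α such that no K' ∈ Choice^m_α satisfies K ≺ K'. -/
/-! Strict dominance is irreflexive, and it is transitive on actions whose intersection with
every state is nonempty: a history in the middle action's cell links the two value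
comparisons. So it is a strict partial order on the finite set `Choice`, which therefore has
an undominated element. -/

/-- `X ≤ Y` iff every history in `X` has value at most that of every history in `Y`. -/
def setLE {H : Type*} (Value : H → ℝ) (X Y : Set H) : Prop :=
  ∀ h ∈ X, ∀ h' ∈ Y, Value h ≤ Value h'

/-- Weak dominance: `K ⪯ K'` iff `K ∩ S ≤ K' ∩ S` for every background state `S`. -/
def weakDom {H : Type*} (Value : H → ℝ) (State : Set (Set H)) (K K' : Set H) : Prop :=
  ∀ S ∈ State, setLE Value (K ∩ S) (K' ∩ S)

/-- Strict dominance: `K ≺ K'` iff `K ⪯ K'` and not `K' ⪯ K`. -/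
def strictDom {H : Type*} (Value : H → ℝ) (State : Set (Set H)) (K K' : Set H) : Prop :=
  weakDom Value State K K' ∧ ¬ weakDom Value State K' K

/-- The optimal (undominated) actions among `Choice`. -/
def Optimal {H : Type*} (Value : H → ℝ) (State : Set (Set H))
    (Choice : Set (Set H)) : Set (Set H) :=
  {K ∈ Choice | ¬ ∃ K' ∈ Choice, strictDom Value State K K'}

/-- `Choice` is a partition of the histories into nonempty actions. -/
def IsChoicePartition {H : Type*} (Choice : Set (Set H)) : Prop :=
  (∀ K ∈ Choice, K.Nonempty) ∧
  (∀ K ∈ Choice, ∀ K' ∈ Choice, K ≠ K' → Disjoint K K') ∧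
  ⋃₀ Choice = Set.univ

theorem Set.Finite.exists_forall_not_rel {α : Type*} {r : α → α → Prop} {s : Set α}
    (hs : s.Finite) (hne : s.Nonempty) (hirr : ∀ a ∈ s, ¬ r a a)
    (htrans : ∀ a ∈ s, ∀ b ∈ s, ∀ c ∈ s, r a b → r b c → r a c) :
    ∃ a ∈ s, ∀ b ∈ s, ¬ r a b := by
  have : Finite s := hs.to_subtype
  have : Nonempty s := hne.to_subtype
  let rSwap : s → s → Prop := fun a b => r b a
  have : IsTrans s rSwap := ⟨fun a b c hab hbc => htrans c c.2 b b.2 a a.2 hbc hab⟩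
  have : Std.Irrefl rSwap := ⟨fun a => hirr a a.2⟩
  obtain ⟨⟨a, ha⟩, -, hmin⟩ :=
    (Finite.wellFounded_of_trans_of_irrefl rSwap).has_min Set.univ Set.univ_nonempty
  exact ⟨a, ha, fun b hb hab => hmin ⟨b, hb⟩ trivial hab⟩

section Dominance

variable {H : Type*} {Value : H → ℝ} {State : Set (Set H)} {K K' K'' : Set H}

theorem weakDom_trans (hK' : ∀ S ∈ State, (K' ∩ S).Nonempty)
    (h₁ : weakDom Value State K K') (h₂ : weakDom Value State K' K'') :
    weakDom Value State K K'' := by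
  intro S hS h hh h'' hh''
  obtain ⟨h', hh'⟩ := hK' S hS
  exact (h₁ S hS h hh h' hh').trans (h₂ S hS h' hh' h'' hh'')

theorem strictDom_irrefl : ¬ strictDom Value State K K :=
  fun h => h.2 h.1

theorem strictDom_trans (hK : ∀ S ∈ State, (K ∩ S).Nonempty)
    (hK' : ∀ S ∈ State, (K' ∩ S).Nonempty)
    (h₁ : strictDom Value State K K') (h₂ : strictDom Value State K' K'') :
    strictDom Value State K K'' :=
  ⟨weakDom_trans hK' h₁.1 h₂.1, fun h => h₂.2 (weakDom_trans hK h h₁.1)⟩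

end Dominance

theorem optimal_nonempty_general {H : Type*}
    (Choice : Set (Set H)) (hfin : Choice.Finite) (hne : Choice.Nonempty)
    (Value : H → ℝ) (State : Set (Set H))
    (hint : ∀ K ∈ Choice, ∀ S ∈ State, (K ∩ S).Nonempty) :
    ∃ K ∈ Choice, ¬ ∃ K' ∈ Choice, strictDom Value State K K' := by
  obtain ⟨K, hK, hmax⟩ := hfin.exists_forall_not_rel hne (fun K _ => strictDom_irrefl)
    fun K hK K' hK' _ _ => strictDom_trans (hint K hK) (hint K' hK')
  exact ⟨K, hK, fun ⟨K', hK', hdom⟩ => hmax K' hK' hdom⟩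

/-- In a finite-choice utilitarian stit model (with every `K ∩ S` nonempty),
the set of optimal actions is nonempty. -/
theorem optimal_nonempty {H : Type*} [Nonempty H]
    (Choice : Set (Set H)) (hfin : Choice.Finite) (hne : Choice.Nonempty)
    (hpart : IsChoicePartition Choice)
    (Value : H → ℝ) (State : Set (Set H))
    (hint : ∀ K ∈ Choice, ∀ S ∈ State, (K ∩ S).Nonempty) :
    ∃ K ∈ Choice, ¬ ∃ K' ∈ Choice, strictDom Value State K K' :=
  optimal_nonempty_general Choice hfin hne Value State hint
end

section
/- Let H be a nonempty set and Choice a partition of H into nonempty cells. For A ⊆ H, define the deliberative stit set D(A) = {h ∈ H : the cell of the partition containing h is a subset of A, and A ≠ H}. Then refraining from refraining is the same as doing: for every A ⊆ H, D(H \ D(H \ D(A))) = D(A). (This is the semantic form of the equivalence [α dstit: ¬[α dstit: ¬[α dstit: A]]] ≡ [α dstit: A].) -/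
/-- The deliberative stit set `D(A)`: histories `h` whose choice cell is contained
in `A`, provided `A` is not the whole set of histories. -/
def Dstit {H : Type*} (Choice : Set (Set H)) (A : Set H) : Set H :=
  {h | (∃ K ∈ Choice, h ∈ K ∧ K ⊆ A) ∧ A ≠ Set.univ}

/-!
`D(A)` is always a union of cells, and a union of cells `S ≠ H` satisfies `D(S) = S`.
Complements of unions of cells are unions of cells, so once `D(A) ≠ ∅` both outer
applications of `D` act as the identity on `H \ D(A)` and on `D(A)`; if `D(A) = ∅`,
both sides are `D(H) = ∅`.
-/

section

variable {H : Type*} {Choice : Set (Set H)}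

theorem IsChoicePartition.exists_mem (hpart : IsChoicePartition Choice) (h : H) :
    ∃ K ∈ Choice, h ∈ K :=
  Set.mem_sUnion.mp (hpart.2.2 ▸ Set.mem_univ h)

theorem IsChoicePartition.eq_of_mem (hpart : IsChoicePartition Choice)
    {K K' : Set H} (hK : K ∈ Choice) (hK' : K' ∈ Choice) {h : H}
    (h₁ : h ∈ K) (h₂ : h ∈ K') : K = K' := by
  by_contra hne
  exact Set.disjoint_left.mp (hpart.2.1 K hK K' hK' hne) h₁ h₂

def IsUnionOfCells (Choice : Set (Set H)) (S : Set H) : Prop :=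
  ∀ K ∈ Choice, ∀ h ∈ K, h ∈ S → K ⊆ S

theorem IsUnionOfCells.compl {S : Set H} (hS : IsUnionOfCells Choice S) :
    IsUnionOfCells Choice Sᶜ :=
  fun K hK _ hh hhS k hk hkS => hhS (hS K hK k hk hkS hh)

end

namespace Dstit

variable {H : Type*} {Choice : Set (Set H)}

@[simp]
theorem univ : Dstit Choice Set.univ = ∅ := by
  simp [Dstit]

theorem subset (A : Set H) : Dstit Choice A ⊆ A := by
  rintro h ⟨⟨K, -, hK, hKA⟩, -⟩
  exact hKA hK

theorem ne_univ_of_nonempty {A : Set H} (hA : (Dstit Choice A).Nonempty) : A ≠ Set.univ := by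
  obtain ⟨-, -, hA⟩ := hA
  exact hA

theorem isUnionOfCells (hpart : IsChoicePartition Choice) (A : Set H) :
    IsUnionOfCells Choice (Dstit Choice A) := by
  rintro K hK h hh ⟨⟨K', hK', hhK', hK'A⟩, hA⟩ k hk
  obtain rfl := hpart.eq_of_mem hK hK' hh hhK'
  exact ⟨⟨K, hK, hk, hK'A⟩, hA⟩

theorem eq_self_of_isUnionOfCells (hpart : IsChoicePartition Choice) {S : Set H}
    (hS : IsUnionOfCells Choice S) (hS_ne : S ≠ Set.univ) : Dstit Choice S = S := by
  refine (subset S).antisymm fun h hh => ⟨?_, hS_ne⟩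
  obtain ⟨K, hK, hhK⟩ := hpart.exists_mem h
  exact ⟨K, hK, hhK, hS K hK h hhK hh⟩

end Dstit

theorem refrain_refrain_eq_do_general {H : Type*}
    (Choice : Set (Set H)) (hpart : IsChoicePartition Choice) (A : Set H) :
    Dstit Choice (Set.univ \ Dstit Choice (Set.univ \ Dstit Choice A)) =
      Dstit Choice A := by
  rcases (Dstit Choice A).eq_empty_or_nonempty with hD | hD
  · simp [hD]
  have hD_ne : Dstit Choice A ≠ Set.univ :=
    fun h => Dstit.ne_univ_of_nonempty hD (Set.univ_subset_iff.mp (h ▸ Dstit.subset A))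
  have hsat := Dstit.isUnionOfCells hpart A
  have hcompl_ne : Set.univ \ Dstit Choice A ≠ Set.univ := by
    simpa [← Set.compl_eq_univ_sdiff] using hD.ne_empty
  rw [Dstit.eq_self_of_isUnionOfCells hpart (Set.compl_eq_univ_sdiff _ ▸ hsat.compl)
      hcompl_ne,
    Set.sdiff_sdiff_cancel_left (Set.subset_univ _),
    Dstit.eq_self_of_isUnionOfCells hpart hsat hD_ne]

/-- Refraining from refraining is the same as doing:
`D(H \ D(H \ D(A))) = D(A)`. -/
theorem refrain_refrain_eq_do {H : Type*} [Nonempty H]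
    (Choice : Set (Set H)) (hpart : IsChoicePartition Choice) (A : Set H) :
    Dstit Choice (Set.univ \ Dstit Choice (Set.univ \ Dstit Choice A)) =
      Dstit Choice A :=
  refrain_refrain_eq_do_general Choice hpart A
end

section
/- Let Q be a type of states with a distinguished initial state q0, Act a type of actions, and Δ ⊆ Q × Act × Q a transition relation. An execution of the automaton T = (Q, q0, Δ) is an infinite sequence of transitions (q_i, a_i, q_{i+1})_{i∈ℕ} with q_0 = q0 and each (q_i, a_i, q_{i+1}) ∈ Δ. Fix an action K ∈ Act and build the automaton T' on the sum type Q ⊕ Q as follows: from a left (renamed-copy) state inl q, for each (q, a, q') ∈ Δ with the restriction that q = q0 implies a = K, put a transition to inl q' if q' ≠ q0 and to inr q0 if q' = q0; from a right state inr q, put a transition (inr q, a, inr q') for each (q, a, q') ∈ Δ. Then the map sending an execution of T' started at inl q0 to the sequence of its actions together with its underlying Q-states (forgetting the inl/inr tag) is a bijection onto the set of executions of T started at q0 whose first action a_0 equals K. -/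
/-- An execution of the automaton `(Q, q0, Δ)` started at `q0`: an infinite
sequence of consecutive transitions `(q_i, a_i, q_{i+1})` with `q_0 = q0`
and each transition in `Δ`. -/
def IsExec {Q Act : Type*} (q0 : Q) (Δ : Set (Q × Act × Q))
    (e : ℕ → Q × Act × Q) : Prop :=
  (e 0).1 = q0 ∧ (∀ i, e i ∈ Δ) ∧ ∀ i, (e i).2.2 = (e (i + 1)).1

/-- The transition relation of the automaton `T'` on `Q ⊕ Q` built from
`T = (Q, q0, Δ)` and the action `K`:
from a left (renamed-copy) state `inl q`, for each `(q, a, q') ∈ Δ` with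
`q = q0 → a = K`, there is a transition to `inl q'` if `q' ≠ q0` and to
`inr q0` if `q' = q0`; from a right state `inr q` there is a transition
`(inr q, a, inr q')` for each `(q, a, q') ∈ Δ`. -/
def DeltaPrime {Q Act : Type*} (q0 : Q) (Δ : Set (Q × Act × Q)) (K : Act) :
    Set ((Q ⊕ Q) × Act × (Q ⊕ Q)) :=
  {t | ∃ q a q', (q, a, q') ∈ Δ ∧
    (((q = q0 → a = K) ∧
      ((q' ≠ q0 ∧ t = (Sum.inl q, a, Sum.inl q')) ∨
       (q' = q0 ∧ t = (Sum.inl q, a, Sum.inr q0)))) ∨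
     t = (Sum.inr q, a, Sum.inr q'))}

/-- Forget the `inl`/`inr` tag of a state of `T'`. -/
def untag {Q : Type*} : Q ⊕ Q → Q := Sum.elim id id

/-- Map an execution of `T'` to the corresponding sequence of transitions of `T`
(same actions, underlying `Q`-states). -/
def forgetTags {Q Act : Type*} (e : ℕ → (Q ⊕ Q) × Act × (Q ⊕ Q)) :
    ℕ → Q × Act × Q :=
  fun i => (untag (e i).1, (e i).2.1, untag (e i).2.2)

/-!
An execution of `T'` never leaves the right copy once it has entered it, and it enters it exactly
when the underlying execution re-enters `q0`. Hence the tags of an execution of `T'` are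
determined, step by step, by its untagged states: retagging an execution of `T` along this rule
inverts `forgetTags`. The first-action constraint is only ever active at the start, since after
position `0` the left state `inl q0` is never reached again.
-/

@[simp] lemma untag_inl {Q : Type*} (q : Q) : untag (.inl q : Q ⊕ Q) = q := rfl

@[simp] lemma untag_inr {Q : Type*} (q : Q) : untag (.inr q : Q ⊕ Q) = q := rfl

namespace DeltaPrime

variable {Q Act : Type*} (q0 : Q)

open Classical in
/-- The state of `T'` reached from `s` by a transition whose underlying target is `q'`. -/
noncomputable def tagStep : Q ⊕ Q → Q → Q ⊕ Q
  | .inl _, q' => if q' = q0 then .inr q' else .inl q'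
  | .inr _, q' => .inr q'

@[simp] lemma untag_tagStep (s : Q ⊕ Q) (q : Q) : untag (tagStep q0 s q) = q := by
  cases s <;> simp [tagStep, apply_ite untag]

lemma tagStep_ne_inl_self (s : Q ⊕ Q) (q : Q) : tagStep q0 s q ≠ .inl q0 := by
  cases s <;> simp [tagStep, ite_eq_iff]

lemma mem_iff {Δ : Set (Q × Act × Q)} {K : Act} {s t : Q ⊕ Q} {a : Act} :
    (s, a, t) ∈ DeltaPrime q0 Δ K ↔
      (untag s, a, untag t) ∈ Δ ∧ (s = .inl q0 → a = K) ∧ t = tagStep q0 s (untag t) := by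
  constructor
  · rintro ⟨q, a, q', hΔ, ⟨hK, ⟨hq', h⟩ | ⟨rfl, h⟩⟩ | h⟩ <;> simp_all [tagStep]
  · obtain ⟨q⟩ | ⟨q⟩ := s
    · rintro ⟨hΔ, hK, ht⟩
      refine ⟨q, a, untag t, hΔ, .inl ⟨fun hq ↦ hK (congrArg _ hq), ?_⟩⟩
      by_cases hq' : untag t = q0
      · rw [tagStep, if_pos hq', hq'] at ht
        exact .inr ⟨hq', by rw [ht]⟩
      · rw [tagStep, if_neg hq'] at ht
        exact .inl ⟨hq', by rw [← ht]⟩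
    · rintro ⟨hΔ, -, ht⟩
      exact ⟨q, a, untag t, hΔ, .inr (by rw [ht]; rfl)⟩

noncomputable def tagStates (e : ℕ → Q × Act × Q) : ℕ → Q ⊕ Q
  | 0 => .inl q0
  | i + 1 => tagStep q0 (tagStates e i) (e i).2.2

noncomputable def addTags (e : ℕ → Q × Act × Q) : ℕ → (Q ⊕ Q) × Act × (Q ⊕ Q) :=
  fun i ↦ (tagStates q0 e i, (e i).2.1, tagStates q0 e (i + 1))

lemma untag_tagStates {e : ℕ → Q × Act × Q} (h0 : (e 0).1 = q0)
    (hchain : ∀ i, (e i).2.2 = (e (i + 1)).1) : ∀ i, untag (tagStates q0 e i) = (e i).1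
  | 0 => h0.symm
  | i + 1 => by simp [tagStates, hchain i]

lemma forgetTags_addTags {e : ℕ → Q × Act × Q} (h0 : (e 0).1 = q0)
    (hchain : ∀ i, (e i).2.2 = (e (i + 1)).1) : forgetTags (addTags q0 e) = e := by
  funext i
  simp only [forgetTags, addTags, untag_tagStates q0 h0 hchain, ← hchain]

lemma isExec_addTags {Δ : Set (Q × Act × Q)} {K : Act} {e : ℕ → Q × Act × Q}
    (he : IsExec q0 Δ e) (hK : (e 0).2.1 = K) :
    IsExec (.inl q0) (DeltaPrime q0 Δ K) (addTags q0 e) := by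
  obtain ⟨h0, hΔ, hchain⟩ := he
  refine ⟨rfl, fun i ↦ (mem_iff q0).2 ⟨?_, ?_, ?_⟩, fun i ↦ rfl⟩
  · simpa only [untag_tagStates q0 h0 hchain, ← hchain] using hΔ i
  · cases i with
    | zero => exact fun _ ↦ hK
    | succ i => exact fun h ↦ absurd h (tagStep_ne_inl_self q0 _ _)
  · simp [tagStates]

variable {Δ : Set (Q × Act × Q)} {K : Act} {e : ℕ → (Q ⊕ Q) × Act × (Q ⊕ Q)}

lemma isExec_forgetTags (he : IsExec (.inl q0) (DeltaPrime q0 Δ K) e) :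
    IsExec q0 Δ (forgetTags e) ∧ (forgetTags e 0).2.1 = K := by
  obtain ⟨h0, hΔ, hchain⟩ := he
  refine ⟨⟨by simp [forgetTags, h0], fun i ↦ ((mem_iff q0).1 (hΔ i)).1,
    fun i ↦ by simp [forgetTags, hchain i]⟩, ((mem_iff q0).1 (hΔ 0)).2.1 h0⟩

lemma tagStates_forgetTags (he : IsExec (.inl q0) (DeltaPrime q0 Δ K) e) :
    ∀ i, tagStates q0 (forgetTags e) i = (e i).1
  | 0 => he.1.symm
  | i + 1 => by
    rw [tagStates, tagStates_forgetTags he i, ← he.2.2 i]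
    exact ((mem_iff q0).1 (he.2.1 i)).2.2.symm

lemma addTags_forgetTags (he : IsExec (.inl q0) (DeltaPrime q0 Δ K) e) :
    addTags q0 (forgetTags e) = e := by
  funext i
  simp only [addTags, tagStates_forgetTags q0 he, ← he.2.2 i]
  rfl

end DeltaPrime

open DeltaPrime in
/-- The map forgetting the tags is a bijection from the executions of `T'`
started at `inl q0` onto the executions of `T` started at `q0` whose first
action equals `K`. -/
theorem exec_bijection {Q Act : Type*} (q0 : Q) (Δ : Set (Q × Act × Q))
    (K : Act) :
    Set.BijOn (forgetTags (Q := Q) (Act := Act))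
      {e | IsExec (Sum.inl q0) (DeltaPrime q0 Δ K) e}
      {e | IsExec q0 Δ e ∧ (e 0).2.1 = K} :=
  Set.InvOn.bijOn
    ⟨fun _ he ↦ addTags_forgetTags q0 he, fun _ he ↦ forgetTags_addTags q0 he.1.1 he.1.2.2⟩
    (fun _ he ↦ isExec_forgetTags q0 he) (fun _ he ↦ isExec_addTags q0 he.1 he.2)
end

section
/- Let R be a binary relation on a type α such that every element has at most one immediate R-predecessor: for all a, b, c, if R b a and R c a then b = c. Let < denote the transitive closure of R. Then the predecessors of any element are linearly ordered: for all m1, m2, m3, if m1 < m3 and m2 < m3, then m1 = m2 or m1 < m2 or m2 < m1. -/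
open Relation

theorem Relation.ReflTransGen.total_of_left_unique {α : Type*} {r : α → α → Prop} {a b c : α}
    (U : Relator.LeftUnique r) (hba : ReflTransGen r b a) (hca : ReflTransGen r c a) :
    ReflTransGen r b c ∨ ReflTransGen r c b :=
  (ReflTransGen.total_of_right_unique (r := Function.swap r) (fun _ _ _ h h' ↦ U h h')
    (reflTransGen_swap.2 hba) (reflTransGen_swap.2 hca)).symm.imp
    reflTransGen_swap.1 reflTransGen_swap.1

/-- If every element has at most one immediate `R`-predecessor, then, with `<`
the transitive closure of `R`, the predecessors of any element are linearly
ordered: any two moments below a common moment are equal or comparable. -/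
theorem transGen_predecessors_linear {α : Type*} (R : α → α → Prop)
    (huniq : ∀ a b c, R b a → R c a → b = c) :
    ∀ m1 m2 m3, Relation.TransGen R m1 m3 → Relation.TransGen R m2 m3 →
      m1 = m2 ∨ Relation.TransGen R m1 m2 ∨ Relation.TransGen R m2 m1 := by
  intro m1 m2 m3 h1 h2
  rcases ReflTransGen.total_of_left_unique (fun a b c ↦ huniq c a b)
    h1.to_reflTransGen h2.to_reflTransGen with h12 | h21
  · rcases reflTransGen_iff_eq_or_transGen.1 h12 with rfl | h12
    exacts [Or.inl rfl, Or.inr (Or.inl h12)]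
  · rcases reflTransGen_iff_eq_or_transGen.1 h21 with rfl | h21
    exacts [Or.inl rfl, Or.inr (Or.inr h21)]
end
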